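/- arXiv:2004.03658 — 3 statements merged into one kernel-verified Lean document; each statement's English description precedes it below -/
import Mathlib

section
/- Let v : Fin N → ℝ≥0 be a weighted set and i ∈ Fin N, and suppose N_W > 2 · |supp(v)|. If h : Fin N → Fin N_W is drawn uniformly at random from all functions Fin N → Fin N_W, then the probability that the primitive-sketch lookup errs, i.e. that s_h(v)[h i] ≠ v i, is at most 1/2. -/
open Finset

/-- The primitive sketch of a weighted set `v` under hash function `h`. -/
def sketch {N NW : ℕ} (h : Fin N → Fin NW) (v : Fin N → NNReal) : Fin NW → NNReal :=
  fun k => ∑ i ∈ Finset.univ.filter (fun i => h i = k), v i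

/-- The support of a weighted set, as a finset. -/
noncomputable def supp {N : ℕ} (v : Fin N → NNReal) : Finset (Fin N) :=
  Finset.univ.filter (fun i => v i ≠ 0)

lemma count_collision {N NW : ℕ} (i j : Fin N) (hij : j ≠ i) :
    (Finset.univ.filter (fun h : Fin N → Fin NW => h j = h i)).card = NW ^ (N - 1) := by
  classical
  have e : {h : Fin N → Fin NW // h j = h i} ≃ ({x : Fin N // x ≠ j} → Fin NW) :=
    { toFun := fun h x => h.1 x.1
      invFun := fun u => ⟨fun x => if hx : x = j then u ⟨i, fun hc => hij hc.symm⟩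
          else u ⟨x, hx⟩, by
        have : i ≠ j := fun hc => hij hc.symm
        simp [this]⟩
      left_inv := fun h => by
        ext x
        by_cases hx : x = j
        · simp [hx, h.2]
        · simp [hx]
      right_inv := fun u => by
        ext x
        simp [x.2] }
  have hcard := Fintype.card_congr e
  rw [Fintype.card_fun] at hcard
  have hsub : Fintype.card {x : Fin N // x ≠ j} = N - 1 := by
    simp [Fintype.card_subtype_compl]
  rw [hsub] at hcard
  rw [← Fintype.card_subtype]
  simpa using hcard

/-- If `NW > 2 * |supp v|` and `h` is drawn uniformly at random from all
functions `Fin N → Fin NW`, then the probability that the primitive-sketch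
lookup errs, i.e. `s_h(v)[h i] ≠ v i`, is at most `1/2`. -/
theorem prob_sketch_lookup_err_le_half
    {N NW : ℕ} (hN : 0 < N) (hNW : 0 < NW)
    (v : Fin N → NNReal) (i : Fin N)
    (hW : 2 * (supp v).card < NW) :
    ((Finset.univ.filter (fun h : Fin N → Fin NW =>
        sketch h v (h i) ≠ v i)).card : ℝ)
      / (Fintype.card (Fin N → Fin NW) : ℝ) ≤ 1 / 2 := by
  classical
  set S := (supp v).card with hS
  -- key: error implies a collision with some j in supp v, j ≠ i
  have key : ∀ h : Fin N → Fin NW, sketch h v (h i) ≠ v i →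
      ∃ j ∈ (supp v).erase i, h j = h i := by
    intro h herr
    by_contra hcon
    push_neg at hcon
    apply herr
    unfold sketch
    rw [Finset.sum_eq_single_of_mem i (by simp)]
    intro b hb hbi
    by_contra hvb
    exact hcon b (by simp [supp, hvb]; exact hbi) (by simpa using hb)
  -- subset of union of collision sets
  have hsubset : (Finset.univ.filter (fun h : Fin N → Fin NW =>
      sketch h v (h i) ≠ v i)) ⊆
      ((supp v).erase i).biUnion
        (fun j => Finset.univ.filter (fun h : Fin N → Fin NW => h j = h i)) := by
    intro h hh
    simp only [mem_filter, mem_univ, true_and] at hh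
    obtain ⟨j, hj, hcol⟩ := key h hh
    exact Finset.mem_biUnion.2 ⟨j, hj, by simp [hcol]⟩
  have hcount : (Finset.univ.filter (fun h : Fin N → Fin NW =>
      sketch h v (h i) ≠ v i)).card ≤ S * NW ^ (N - 1) := by
    calc _ ≤ _ := Finset.card_le_card hsubset
      _ ≤ ∑ j ∈ (supp v).erase i, (Finset.univ.filter
            (fun h : Fin N → Fin NW => h j = h i)).card := Finset.card_biUnion_le
      _ = ∑ j ∈ (supp v).erase i, NW ^ (N - 1) := by
          apply Finset.sum_congr rfl
          intro j hj
          exact count_collision i j (Finset.ne_of_mem_erase hj)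
      _ = ((supp v).erase i).card * NW ^ (N - 1) := by
          rw [Finset.sum_const, smul_eq_mul]
      _ ≤ S * NW ^ (N - 1) := by
          exact Nat.mul_le_mul_right _ (Finset.card_erase_le.trans le_rfl)
  have htot : Fintype.card (Fin N → Fin NW) = NW ^ N := by simp
  have hNWNpos : (0 : ℝ) < (NW : ℝ) ^ N := by positivity
  rw [htot]
  rw [div_le_div_iff₀ (by exact_mod_cast hNWNpos) (by norm_num)]
  push_cast
  rw [one_mul]
  have h1 : ((Finset.univ.filter (fun h : Fin N → Fin NW =>
      sketch h v (h i) ≠ v i)).card : ℝ) * 2 ≤ (S * NW ^ (N - 1) : ℕ) * 2 := by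
    have := hcount
    exact_mod_cast Nat.mul_le_mul_right 2 this
  refine h1.trans ?_
  have h2 : (S * NW ^ (N - 1)) * 2 ≤ NW ^ N := by
    have : 2 * S ≤ NW := le_of_lt hW
    calc (S * NW ^ (N - 1)) * 2 = (2 * S) * NW ^ (N - 1) := by ring
      _ ≤ NW * NW ^ (N - 1) := Nat.mul_le_mul_right _ this
      _ = NW ^ N := by
          have hn : N = N - 1 + 1 := (Nat.succ_pred_eq_of_pos hN).symm
          conv_rhs => rw [hn, pow_succ]
          ring
  exact_mod_cast h2
end

section
/- (Count-min lookup error bound.) Let v : Fin N → ℝ≥0 be a weighted set, let i ∈ Fin N, and suppose N_W > 2 · |supp(v)|. If the family H = (h_1,…,h_{N_D}) is drawn uniformly at random in the random-hash model, then the probability that the count-min lookup errs, i.e. that CM_H(i, S_H(v)) ≠ v i, is at most 1 / 2^{N_D}. -/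
open Finset

/-- The count-min sketch of `v` under the family `H`: the `j`-th row is the
primitive sketch of `v` under `H j`. -/
def cmSketch {N NW ND : ℕ} (H : Fin ND → Fin N → Fin NW) (v : Fin N → NNReal) :
    Fin ND → Fin NW → NNReal :=
  fun j => sketch (H j) v

/-- The count-min lookup of `i` in an `ND × NW` matrix `M`, relative to the
family `H`: the minimum over `j` of `M[j, h_j(i)]`. -/
noncomputable def cmLookup {N NW ND : ℕ} (H : Fin ND → Fin N → Fin NW)
    (M : Fin ND → Fin NW → NNReal) (i : Fin N) : NNReal :=
  ⨅ j, M j (H j i)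

/-!
The count-min lookup always overestimates, and row `j` is exact as soon as `h_j` separates `i`
from the other points of `supp v`. So an error forces a collision of `i` with the support in
every row. For a single uniform hash and a fixed `i' ≠ i`, a collision `h i' = h i` has
probability `1 / N_W`; a union bound over `supp v` makes a row collide with probability at
most `|supp v| / N_W ≤ 1 / 2`, and the `N_D` rows are independent.
-/

section Collisions

variable {α β : Type*} [Fintype α] [DecidableEq α] [Fintype β] [DecidableEq β]

def collideAtProdEquiv {a b : α} (hab : a ≠ b) : {f : α → β // f a = f b} × β ≃ (α → β) where
  toFun p := Function.update p.1.1 a p.2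
  invFun g := (⟨Function.update g a (g b), by simp [hab.symm]⟩, g a)
  left_inv := by
    rintro ⟨⟨f, hf⟩, c⟩
    ext <;> simp [hab.symm, ← hf]
  right_inv g := by simp

theorem card_filter_apply_eq_apply_mul_card {a b : α} (hab : a ≠ b) :
    #{f : α → β | f a = f b} * Fintype.card β = Fintype.card β ^ Fintype.card α := by
  rw [← Fintype.card_subtype, ← Fintype.card_prod, Fintype.card_congr (collideAtProdEquiv hab),
    Fintype.card_fun]

end Collisions

variable {N : ℕ}

noncomputable def collisions (NW : ℕ) (v : Fin N → NNReal) (i : Fin N) : Finset (Fin N → Fin NW) :=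
  {h | ∃ i' ∈ (supp v).erase i, h i' = h i}

variable {NW ND : ℕ}

theorem le_sketch_apply_self (h : Fin N → Fin NW) (v : Fin N → NNReal) (i : Fin N) :
    v i ≤ sketch h v (h i) :=
  single_le_sum (fun _ _ => zero_le) (by simp)

theorem sketch_apply_self_of_notMem_collisions {h : Fin N → Fin NW} {v : Fin N → NNReal}
    {i : Fin N} (hh : h ∉ collisions NW v i) : sketch h v (h i) = v i := by
  refine sum_eq_single_of_mem i (by simp) fun i' hi' hne => ?_
  by_contra hv
  exact hh (by simpa [collisions, supp] using ⟨i', ⟨hne, hv⟩, (mem_filter.1 hi').2⟩)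

theorem cmLookup_cmSketch_of_notMem_collisions {H : Fin ND → Fin N → Fin NW}
    {v : Fin N → NNReal} {i : Fin N} {j : Fin ND} (hj : H j ∉ collisions NW v i) :
    cmLookup H (cmSketch H v) i = v i :=
  le_antisymm ((ciInf_le' _ j).trans_eq (sketch_apply_self_of_notMem_collisions hj))
    (have : Nonempty (Fin ND) := ⟨j⟩; le_ciInf fun j' => le_sketch_apply_self (H j') v i)

theorem filter_cmLookup_ne_subset_piFinset_collisions (v : Fin N → NNReal) (i : Fin N) :
    ({H : Fin ND → Fin N → Fin NW | cmLookup H (cmSketch H v) i ≠ v i} : Finset _)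
      ⊆ Fintype.piFinset fun _ => collisions NW v i := fun _ hH =>
  Fintype.mem_piFinset.2 fun _ =>
    by_contra fun hj => (mem_filter.1 hH).2 (cmLookup_cmSketch_of_notMem_collisions hj)

theorem card_collisions_mul_le (v : Fin N → NNReal) (i : Fin N) :
    #(collisions NW v i) * NW ≤ #(supp v) * NW ^ N := by
  have hunion : collisions NW v i
      ⊆ ((supp v).erase i).biUnion fun i' => {h : Fin N → Fin NW | h i' = h i} := by
    intro h hh
    obtain ⟨i', hi', heq⟩ := (mem_filter.1 hh).2
    exact mem_biUnion.2 ⟨i', hi', by simp [heq]⟩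
  calc #(collisions NW v i) * NW
      ≤ (∑ i' ∈ (supp v).erase i, #{h : Fin N → Fin NW | h i' = h i}) * NW :=
        Nat.mul_le_mul_right _ ((card_le_card hunion).trans card_biUnion_le)
    _ = ∑ _i' ∈ (supp v).erase i, NW ^ N := by
        rw [sum_mul]
        refine sum_congr rfl fun i' hi' => ?_
        simpa using card_filter_apply_eq_apply_mul_card (β := Fin NW) (ne_of_mem_erase hi')
    _ ≤ #(supp v) * NW ^ N := by
        rw [sum_const, smul_eq_mul]
        exact Nat.mul_le_mul_right _ card_erase_le

theorem two_mul_card_collisions_le (v : Fin N → NNReal) (i : Fin N)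
    (hW : 2 * #(supp v) < NW) : 2 * #(collisions NW v i) ≤ NW ^ N := by
  have hNW : 0 < NW := by omega
  refine Nat.le_of_mul_le_mul_right ?_ hNW
  calc 2 * #(collisions NW v i) * NW
      = 2 * (#(collisions NW v i) * NW) := mul_assoc ..
    _ ≤ 2 * (#(supp v) * NW ^ N) := Nat.mul_le_mul_left _ (card_collisions_mul_le v i)
    _ = 2 * #(supp v) * NW ^ N := (mul_assoc ..).symm
    _ ≤ NW * NW ^ N := Nat.mul_le_mul_right _ hW.le
    _ = NW ^ N * NW := mul_comm ..

theorem prob_cmLookup_err_le_general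
    {N NW ND : ℕ}
    (v : Fin N → NNReal) (i : Fin N)
    (hW : 2 * (supp v).card < NW) :
    ((Finset.univ.filter (fun H : Fin ND → Fin N → Fin NW =>
        cmLookup H (cmSketch H v) i ≠ v i)).card : ℝ)
      / (Fintype.card (Fin ND → Fin N → Fin NW) : ℝ)
      ≤ 1 / 2 ^ ND := by
  have hcard := card_le_card (filter_cmLookup_ne_subset_piFinset_collisions (ND := ND) (NW := NW) v i)
  rw [Fintype.card_piFinset_const] at hcard
  have hrow : (#(collisions NW v i) : ℝ) / (NW ^ N : ℕ) ≤ 1 / 2 := by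
    have hpos : (0 : ℝ) < (NW ^ N : ℕ) := by exact_mod_cast pow_pos (by omega : 0 < NW) N
    rw [div_le_div_iff₀ hpos two_pos, one_mul]
    exact_mod_cast (mul_comm _ _).trans_le (two_mul_card_collisions_le v i hW)
  calc _ ≤ ((#(collisions NW v i) ^ ND : ℕ) : ℝ) / ((NW ^ N : ℕ) ^ ND : ℕ) := by
        rw [Fintype.card_pi_const, Fintype.card_fun, Fintype.card_fin, Fintype.card_fin]
        gcongr
    _ = ((#(collisions NW v i) : ℝ) / (NW ^ N : ℕ)) ^ ND := by push_cast; rw [div_pow]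
    _ ≤ (1 / 2) ^ ND := pow_le_pow_left₀ (by positivity) hrow ND
    _ = 1 / 2 ^ ND := by rw [div_pow, one_pow]

/-- Count-min lookup error bound: if `NW > 2 * |supp v|` and the family `H`
of `ND` hash functions is drawn uniformly at random, the probability that
`CM_H(i, S_H(v)) ≠ v i` is at most `1 / 2 ^ ND`. -/
theorem prob_cmLookup_err_le
    {N NW ND : ℕ} (hN : 0 < N) (hNW : 0 < NW) (hND : 0 < ND)
    (v : Fin N → NNReal) (i : Fin N)
    (hW : 2 * (supp v).card < NW) :
    ((Finset.univ.filter (fun H : Fin ND → Fin N → Fin NW =>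
        cmLookup H (cmSketch H v) i ≠ v i)).card : ℝ)
      / (Fintype.card (Fin ND → Fin N → Fin NW) : ℝ)
      ≤ 1 / 2 ^ ND :=
  prob_cmLookup_err_le_general v i hW
end

section
/- (Relative-error count-min bound.) Let v : Fin N → ℝ≥0 be a weighted set, let i ∈ Fin N, and let ε > 0 satisfy N_W ≥ 2/ε. If the family H = (h_1,…,h_{N_D}) is drawn uniformly at random in the random-hash model, then the probability that CM_H(i, S_H(v)) > v i + ε · ‖v‖₁ is at most 1 / 2^{N_D}. In particular, if additionally N_D ≥ log₂(1/δ) for some 0 < δ ≤ 1, this probability is at most δ. -/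
open Finset

section Sketch

variable {N NW : ℕ}

theorem sketch_apply_self (h : Fin N → Fin NW) (v : Fin N → NNReal) (i : Fin N) :
    sketch h v (h i) = v i + ∑ i' ∈ univ.erase i, if h i' = h i then v i' else 0 := by
  rw [← sum_filter, filter_erase, sketch, add_sum_erase _ _ (by simp)]

theorem sum_sketch_excess_mul (v : Fin N → NNReal) (i : Fin N) :
    (∑ h : Fin N → Fin NW, ∑ i' ∈ univ.erase i, if h i' = h i then v i' else 0) * NW
      = (∑ i' ∈ univ.erase i, v i') * NW ^ N := by
  rw [sum_comm, sum_mul, sum_mul]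
  refine sum_congr rfl fun i' hi' => ?_
  have hcoll := card_filter_apply_eq_apply_mul_card (β := Fin NW) (ne_of_mem_erase hi')
  rw [Fintype.card_fin, Fintype.card_fin] at hcoll
  rw [← sum_filter, sum_const, nsmul_eq_mul, mul_right_comm, ← Nat.cast_mul, hcoll]
  push_cast
  ring

theorem two_mul_card_lt_sketch_le (v : Fin N → NNReal) (i : Fin N) {ε : ℝ} (hε : 0 < ε)
    (hW : 2 / ε ≤ (NW : ℝ)) :
    2 * #{h : Fin N → Fin NW | (v i : ℝ) + ε * ∑ i', (v i' : ℝ) < sketch h v (h i)}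
      ≤ NW ^ N := by
  set S : ℝ := ∑ i', (v i' : ℝ)
  set B : Finset (Fin N → Fin NW) := {h | (v i : ℝ) + ε * S < sketch h v (h i)}
  set excess : (Fin N → Fin NW) → NNReal :=
    fun h => ∑ i' ∈ univ.erase i, if h i' = h i then v i' else 0
  have excess_le : ∀ h, (excess h : ℝ) ≤ S := fun h => by
    have : excess h ≤ ∑ i', v i' := by
      simp only [excess, ← sum_filter]
      exact sum_le_sum_of_subset (subset_univ _)
    simpa [S] using NNReal.coe_le_coe.2 this
  have mem_B : ∀ h ∈ B, ε * S < excess h := fun h hh => by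
    have := (mem_filter.1 hh).2
    rwa [sketch_apply_self, NNReal.coe_add, add_lt_add_iff_left] at this
  rcases B.eq_empty_or_nonempty with hB | ⟨h₀, hh₀⟩
  · simp [hB]
  have hS : 0 < S := by
    by_contra! hS
    nlinarith [mem_B h₀ hh₀, excess_le h₀, (excess h₀).coe_nonneg]
  have markov : #B * (ε * S) ≤ ∑ h, (excess h : ℝ) := by
    rw [← nsmul_eq_mul]
    exact (card_nsmul_le_sum _ _ _ fun h hh => (mem_B h hh).le).trans
      (sum_le_univ_sum_of_nonneg fun h => (excess h).coe_nonneg)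
  have mean : (∑ h, (excess h : ℝ)) * NW ≤ S * NW ^ N := by
    calc (∑ h, (excess h : ℝ)) * NW = ((∑ i' ∈ univ.erase i, v i' : NNReal) : ℝ) * NW ^ N := by
          exact_mod_cast congrArg NNReal.toReal (sum_sketch_excess_mul v i)
      _ ≤ S * NW ^ N := by
          push_cast
          gcongr
          exact sum_le_univ_sum_of_nonneg fun i' => (v i').coe_nonneg
  have hεW : 2 ≤ ε * NW := by rwa [div_le_iff₀' hε] at hW
  have : (2 * #B : ℝ) * S ≤ NW ^ N * S :=
    calc (2 * #B : ℝ) * S ≤ (ε * NW) * #B * S := by gcongr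
      _ = #B * (ε * S) * NW := by ring
      _ ≤ (∑ h, (excess h : ℝ)) * NW := by gcongr
      _ ≤ S * NW ^ N := mean
      _ = NW ^ N * S := mul_comm ..
  exact_mod_cast le_of_mul_le_mul_right this hS

theorem card_lt_cmLookup_le {ND : ℕ} (v : Fin N → NNReal) (i : Fin N) (t : ℝ) :
    #{H : Fin ND → Fin N → Fin NW | t < cmLookup H (cmSketch H v) i}
      ≤ #{h : Fin N → Fin NW | t < sketch h v (h i)} ^ ND := by
  rw [← Fintype.card_piFinset_const]
  refine card_le_card fun H hH => Fintype.mem_piFinset.2 fun j => mem_filter.2 ⟨mem_univ _, ?_⟩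
  exact (mem_filter.1 hH).2.trans_le (NNReal.coe_le_coe.2 (ciInf_le (OrderBot.bddBelow _) j))

end Sketch

theorem one_div_two_pow_le_of_logb_le {δ : ℝ} {n : ℕ} (hδ : 0 < δ)
    (h : Real.logb 2 (1 / δ) ≤ n) : 1 / 2 ^ n ≤ δ := by
  rw [Real.logb_le_iff_le_rpow one_lt_two (by positivity), Real.rpow_natCast] at h
  exact (one_div_le hδ (by positivity)).1 h

theorem prob_cmLookup_relative_err_general
    {N NW ND : ℕ}
    (v : Fin N → NNReal) (i : Fin N)
    (ε : ℝ) (hε : 0 < ε) (hW : 2 / ε ≤ (NW : ℝ)) :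
    ((Finset.univ.filter (fun H : Fin ND → Fin N → Fin NW =>
        (v i : ℝ) + ε * ∑ i' : Fin N, (v i' : ℝ)
          < (cmLookup H (cmSketch H v) i : ℝ))).card : ℝ)
      / (Fintype.card (Fin ND → Fin N → Fin NW) : ℝ)
      ≤ 1 / 2 ^ ND ∧
    ∀ δ : ℝ, 0 < δ → δ ≤ 1 → Real.logb 2 (1 / δ) ≤ (ND : ℝ) →
      ((Finset.univ.filter (fun H : Fin ND → Fin N → Fin NW =>
          (v i : ℝ) + ε * ∑ i' : Fin N, (v i' : ℝ)
            < (cmLookup H (cmSketch H v) i : ℝ))).card : ℝ)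
        / (Fintype.card (Fin ND → Fin N → Fin NW) : ℝ)
        ≤ δ := by
  set t := (v i : ℝ) + ε * ∑ i', (v i' : ℝ)
  set bad := #{h : Fin N → Fin NW | t < sketch h v (h i)}
  have half : (bad : ℝ) / NW ^ N ≤ 1 / 2 := by
    have markov : (2 * bad : ℝ) ≤ NW ^ N := by
      simpa using (Nat.cast_le (α := ℝ)).2 (two_mul_card_lt_sketch_le v i hε hW)
    exact div_le_of_le_mul₀ (by positivity) (by norm_num) (by linarith)
  have main : (#{H : Fin ND → Fin N → Fin NW | t < cmLookup H (cmSketch H v) i} : ℝ)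
      / Fintype.card (Fin ND → Fin N → Fin NW) ≤ 1 / 2 ^ ND :=
    calc _ ≤ (bad ^ ND : ℝ) / (NW ^ N) ^ ND := by
          simp only [Fintype.card_fun, Fintype.card_fin, Nat.cast_pow]
          gcongr
          exact_mod_cast card_lt_cmLookup_le v i t
      _ = ((bad : ℝ) / NW ^ N) ^ ND := (div_pow ..).symm
      _ ≤ (1 / 2) ^ ND := by gcongr
      _ = 1 / 2 ^ ND := by rw [div_pow, one_pow]
  exact ⟨main, fun δ hδ _ hlog => main.trans (one_div_two_pow_le_of_logb_le hδ hlog)⟩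

/-- Relative-error count-min bound: if `ε > 0` with `NW ≥ 2/ε`, then for `H`
drawn uniformly at random, the probability that
`CM_H(i, S_H(v)) > v i + ε * ‖v‖₁` is at most `1 / 2 ^ ND`; in particular,
if moreover `ND ≥ log₂(1/δ)` with `0 < δ ≤ 1`, it is at most `δ`. -/
theorem prob_cmLookup_relative_err
    {N NW ND : ℕ} (hN : 0 < N) (hNW : 0 < NW) (hND : 0 < ND)
    (v : Fin N → NNReal) (i : Fin N)
    (ε : ℝ) (hε : 0 < ε) (hW : 2 / ε ≤ (NW : ℝ)) :
    ((Finset.univ.filter (fun H : Fin ND → Fin N → Fin NW =>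
        (v i : ℝ) + ε * ∑ i' : Fin N, (v i' : ℝ)
          < (cmLookup H (cmSketch H v) i : ℝ))).card : ℝ)
      / (Fintype.card (Fin ND → Fin N → Fin NW) : ℝ)
      ≤ 1 / 2 ^ ND ∧
    ∀ δ : ℝ, 0 < δ → δ ≤ 1 → Real.logb 2 (1 / δ) ≤ (ND : ℝ) →
      ((Finset.univ.filter (fun H : Fin ND → Fin N → Fin NW =>
          (v i : ℝ) + ε * ∑ i' : Fin N, (v i' : ℝ)
            < (cmLookup H (cmSketch H v) i : ℝ))).card : ℝ)
        / (Fintype.card (Fin ND → Fin N → Fin NW) : ℝ)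
        ≤ δ :=
  prob_cmLookup_relative_err_general v i ε hε hW
end
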